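/- arXiv:1801.10354 — 2 statements merged into one kernel-verified Lean document; each statement's English description precedes it below -/
import Mathlib

section
/- Convolution decay lemma: let X, Y be Banach spaces and S(t) a family of bounded operators such that ‖S(t)‖_{X→X} ≤ C_X e^{−at^b}, ‖S(t)‖_{Y→Y} ≤ C_Y e^{−at^b}, and ‖S(t)‖_{X→Y} ≤ C_{X,Y} t^{−α} e^{−at^b} for all t > 0, with a > 0, 0 < b < 1, α > 0. Define the n-fold time convolution S^{(*n)}(t) = ∫₀^t S(s) S^{(*(n-1))}(t−s) ds. Then for every integer n ≥ 1: ‖S^{(*n)}(t)‖_{X→X} ≤ C_{X,n} t^{n−1} e^{−at^b}, and if n > α+1, for every b* < b there is C with ‖S^{(*n)}(t)‖_{X→Y} ≤ C e^{−a t^{b*}}. -/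
/-!
Write `e(t) = exp (-a t^b)`. Since `0 ≤ b ≤ 1`, `t^b ≤ s^b + (t - s)^b`, so `e(s) e(t - s) ≤ e(t)`:
the stretched exponential survives each convolution while the polynomial prefactor gains one
power of `t`, which gives the `X → X` bound `t^(n-1) e(t)`. For `ι ∘ S^(*(n+1))` the integral is
split at `s = t/2`: for `s ≤ t/2` write `ι S(s) = SY(s) ι` and use the inductive `X → Y` bound at
`t - s ≥ t/2`; for `s ≥ t/2` the singular factor `s^(-α)` is at most `2^α t^(-α)`. This yields
`‖ι S^(*n)(t)‖ ≲ t^(n-1-α) e(t)`. When `n > α + 1` the exponent is nonnegative, and the power is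
absorbed by half of the exponential rate, `t^β ≲ exp (a t^b / 2)`, while `t^b' ≤ M + t^b / 2`.
-/

open MeasureTheory Real intervalIntegral

open Set

lemma nonneg_of_norm_le_mul {E : Type*} [SeminormedAddCommGroup E] {x : E} {C w : ℝ}
    (h : ‖x‖ ≤ C * w) (hw : 0 < w) : 0 ≤ C :=
  nonneg_of_mul_nonneg_left ((norm_nonneg x).trans h) hw

namespace Real

lemma exp_neg_mul_rpow_mul_exp_neg_mul_sub_rpow_le {a b s t : ℝ} (ha : 0 ≤ a) (hb0 : 0 ≤ b)
    (hb1 : b ≤ 1) (hs : 0 ≤ s) (hst : s ≤ t) :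
    exp (-a * s ^ b) * exp (-a * (t - s) ^ b) ≤ exp (-a * t ^ b) := by
  have hsub := rpow_add_le_add_rpow hs (sub_nonneg.2 hst) hb0 hb1
  rw [add_sub_cancel] at hsub
  rw [← exp_add, exp_le_exp]
  nlinarith

lemma rpow_le_two_rpow_abs_mul_rpow {x t : ℝ} (c : ℝ) (ht : 0 < t) (hx : t / 2 ≤ x)
    (hxt : x ≤ t) : x ^ c ≤ 2 ^ |c| * t ^ c := by
  rcases le_total 0 c with hc | hc
  · calc x ^ c ≤ t ^ c := rpow_le_rpow (by linarith) hxt hc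
      _ ≤ 2 ^ |c| * t ^ c :=
        le_mul_of_one_le_left (by positivity) (one_le_rpow one_le_two (abs_nonneg c))
  · calc x ^ c ≤ (t / 2) ^ c := rpow_le_rpow_of_nonpos (by positivity) hx hc
      _ = 2 ^ |c| * t ^ c := by
        rw [abs_of_nonpos hc, div_rpow ht.le zero_le_two, rpow_neg zero_le_two, div_eq_inv_mul]

lemma exists_rpow_le_mul_exp_mul_rpow {β b c : ℝ} (hβ : 0 ≤ β) (hb : 0 < b) (hc : 0 < c) :
    ∃ K, ∀ t > (0 : ℝ), t ^ β ≤ K * exp (c * t ^ b) := by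
  set m := ⌈β / b⌉₊
  refine ⟨1 + m.factorial / c ^ m, fun t ht => ?_⟩
  have hpow : t ^ β ≤ 1 + (t ^ b) ^ m := by
    rcases le_total t 1 with h | h
    · linarith [rpow_le_one ht.le h hβ, pow_nonneg (rpow_nonneg ht.le b) m]
    · calc t ^ β ≤ t ^ (b * m) := rpow_le_rpow_of_exponent_le h
            ((div_le_iff₀' hb).1 (Nat.le_ceil _))
        _ = (t ^ b) ^ m := by rw [rpow_mul ht.le, rpow_natCast]
        _ ≤ 1 + (t ^ b) ^ m := le_add_of_nonneg_left zero_le_one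
  have htaylor : (t ^ b) ^ m ≤ m.factorial / c ^ m * exp (c * t ^ b) := by
    have := pow_div_factorial_le_exp _ (mul_nonneg hc.le (rpow_nonneg ht.le b)) m
    rw [mul_pow, div_le_iff₀ (by positivity)] at this
    rw [div_mul_eq_mul_div, le_div_iff₀ (by positivity)]
    linarith
  nlinarith [one_le_exp (mul_nonneg hc.le (rpow_nonneg ht.le b))]

lemma exists_rpow_le_add_half_rpow {b b' : ℝ} (hb' : 0 < b') (hb'b : b' < b) :
    ∃ M, ∀ t > (0 : ℝ), t ^ b' ≤ M + t ^ b / 2 := by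
  set T : ℝ := 2 ^ (b - b')⁻¹
  refine ⟨T ^ b', fun t ht => ?_⟩
  rcases le_total t T with h | h
  · linarith [rpow_le_rpow ht.le h hb'.le, rpow_nonneg ht.le b]
  · have hT : T ^ (b - b') = 2 := by
      rw [← rpow_mul zero_le_two, inv_mul_cancel₀ (sub_pos.2 hb'b).ne', rpow_one]
    have h2 : 2 ≤ t ^ (b - b') := hT ▸ rpow_le_rpow (by positivity) h (sub_pos.2 hb'b).le
    have hsplit : t ^ b = t ^ b' * t ^ (b - b') := by rw [← rpow_add ht, add_sub_cancel]
    nlinarith [rpow_nonneg ht.le b', rpow_nonneg (show (0:ℝ) ≤ T by positivity) b']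

lemma exists_rpow_mul_exp_neg_mul_rpow_le {β a b b' : ℝ} (hβ : 0 ≤ β) (ha : 0 < a)
    (hb' : 0 < b') (hb'b : b' < b) :
    ∃ C, ∀ t > (0 : ℝ), t ^ β * exp (-a * t ^ b) ≤ C * exp (-a * t ^ b') := by
  obtain ⟨K, hK⟩ := exists_rpow_le_mul_exp_mul_rpow hβ (hb'.trans hb'b) (half_pos ha)
  obtain ⟨M, hM⟩ := exists_rpow_le_add_half_rpow hb' hb'b
  refine ⟨K * exp (a * M), fun t ht => ?_⟩
  calc t ^ β * exp (-a * t ^ b) ≤ K * exp (a / 2 * t ^ b) * exp (-a * t ^ b) :=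
        mul_le_mul_of_nonneg_right (hK t ht) (exp_pos _).le
    _ = K * exp (-(a / 2) * t ^ b) := by rw [mul_assoc, ← exp_add]; ring_nf
    _ ≤ K * exp (a * M + -a * t ^ b') := by
        have hK0 : 0 ≤ K := nonneg_of_mul_nonneg_left
          ((rpow_nonneg ht.le β).trans (hK t ht)) (exp_pos _)
        gcongr
        nlinarith [hM t ht]
    _ = K * exp (a * M) * exp (-a * t ^ b') := by rw [exp_add, mul_assoc]

end Real

section Convolution

variable {X Y Z : Type*} [NormedAddCommGroup X] [NormedSpace ℝ X] [NormedAddCommGroup Y]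
  [NormedSpace ℝ Y] [NormedAddCommGroup Z] [NormedSpace ℝ Z]

lemma norm_intervalIntegral_le_of_forall_Ioo {f : ℝ → X} {t K : ℝ} (ht : 0 ≤ t)
    (h : ∀ s ∈ Ioo 0 t, ‖f s‖ ≤ K) : ‖∫ s in 0..t, f s‖ ≤ K * t := by
  have hbound : ∀ᵐ s, s ∈ uIoc 0 t → ‖f s‖ ≤ K := by
    filter_upwards [volume.ae_ne t] with s hst hs
    rw [uIoc_of_le ht] at hs
    exact h s ⟨hs.1, lt_of_le_of_ne hs.2 hst⟩
  simpa [abs_of_nonneg ht] using norm_integral_le_of_norm_le_const_ae hbound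

lemma norm_map_intervalIntegral_le_of_forall_Ioo [CompleteSpace X] [CompleteSpace Y]
    (L : X →L[ℝ] Y) {f : ℝ → X} {t K : ℝ} (ht : 0 < t) (h : ∀ s ∈ Ioo 0 t, ‖L (f s)‖ ≤ K) :
    ‖L (∫ s in 0..t, f s)‖ ≤ K * t := by
  by_cases hf : IntervalIntegrable f volume 0 t
  · rw [← L.intervalIntegral_comp_comm hf]
    exact norm_intervalIntegral_le_of_forall_Ioo ht.le h
  · have hK : 0 ≤ K := (norm_nonneg _).trans (h (t / 2) ⟨half_pos ht, half_lt_self ht⟩)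
    rw [integral_undef hf, map_zero, norm_zero]
    positivity

lemma norm_comp_le_mul_exp_neg_mul_rpow (A : Y →L[ℝ] Z) (B : X →L[ℝ] Y) {a b s t P Q : ℝ}
    (ha : 0 ≤ a) (hb0 : 0 ≤ b) (hb1 : b ≤ 1) (hs : 0 ≤ s) (hst : s ≤ t)
    (hA : ‖A‖ ≤ P * exp (-a * s ^ b)) (hB : ‖B‖ ≤ Q * exp (-a * (t - s) ^ b)) :
    ‖A.comp B‖ ≤ P * Q * exp (-a * t ^ b) := by
  have hP := nonneg_of_norm_le_mul hA (exp_pos _)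
  have hQ := nonneg_of_norm_le_mul hB (exp_pos _)
  calc ‖A.comp B‖ ≤ ‖A‖ * ‖B‖ := A.opNorm_comp_le B
    _ ≤ P * exp (-a * s ^ b) * (Q * exp (-a * (t - s) ^ b)) :=
        mul_le_mul hA hB (norm_nonneg _) (by positivity)
    _ = P * Q * (exp (-a * s ^ b) * exp (-a * (t - s) ^ b)) := by ring
    _ ≤ P * Q * exp (-a * t ^ b) := mul_le_mul_of_nonneg_left
        (exp_neg_mul_rpow_mul_exp_neg_mul_sub_rpow_le ha hb0 hb1 hs hst) (mul_nonneg hP hQ)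

end Convolution

section IteratedConvolution

variable {X Y : Type*} [NormedAddCommGroup X] [NormedSpace ℝ X] [NormedAddCommGroup Y]
  [NormedSpace ℝ Y] {S : ℝ → X →L[ℝ] X} {Sn : ℕ → ℝ → X →L[ℝ] X} {a b : ℝ}

lemma exists_norm_iterConv_le {CX : ℝ} (ha : 0 ≤ a) (hb0 : 0 ≤ b) (hb1 : b ≤ 1)
    (hX : ∀ t > (0 : ℝ), ‖S t‖ ≤ CX * exp (-a * t ^ b)) (hSn1 : Sn 1 = S)
    (hSnrec : ∀ n : ℕ, 1 ≤ n → ∀ t : ℝ,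
      Sn (n + 1) t = ∫ s in (0 : ℝ)..t, (S s).comp (Sn n (t - s)))
    {n : ℕ} (hn : 1 ≤ n) :
    ∃ C, 0 ≤ C ∧ ∀ t > (0 : ℝ), ‖Sn n t‖ ≤ C * t ^ ((n : ℝ) - 1) * exp (-a * t ^ b) := by
  have hCX : 0 ≤ CX := nonneg_of_norm_le_mul (hX 1 one_pos) (exp_pos _)
  induction n, hn using Nat.le_induction with
  | base => exact ⟨CX, hCX, fun t ht => by simpa [hSn1] using hX t ht⟩
  | succ n hn ih =>
    obtain ⟨C, hC, hSn⟩ := ih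
    have hn' : (0 : ℝ) ≤ n - 1 := by
      rw [sub_nonneg]; exact_mod_cast hn
    refine ⟨CX * C, mul_nonneg hCX hC, fun t ht => ?_⟩
    rw [hSnrec n hn t]
    calc ‖∫ s in (0 : ℝ)..t, (S s).comp (Sn n (t - s))‖
        ≤ CX * (C * t ^ ((n : ℝ) - 1)) * exp (-a * t ^ b) * t :=
          norm_intervalIntegral_le_of_forall_Ioo ht.le fun s ⟨hs0, hst⟩ => calc
            ‖(S s).comp (Sn n (t - s))‖
              ≤ CX * (C * (t - s) ^ ((n : ℝ) - 1)) * exp (-a * t ^ b) :=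
                norm_comp_le_mul_exp_neg_mul_rpow _ _ ha hb0 hb1 hs0.le hst.le (hX s hs0)
                  (hSn _ (sub_pos.2 hst))
            _ ≤ CX * (C * t ^ ((n : ℝ) - 1)) * exp (-a * t ^ b) := by
                gcongr; linarith
      _ = CX * C * t ^ (((n + 1 : ℕ) : ℝ) - 1) * exp (-a * t ^ b) := by
          rw [Nat.cast_succ, add_sub_cancel_right, ← sub_add_cancel (n : ℝ) 1,
            rpow_add_one ht.ne', add_sub_cancel_right]
          ring

lemma norm_comp_comp_le_rpow_mul_exp (ι : X →L[ℝ] Y) {SY : ℝ → Y →L[ℝ] Y}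
    {T : ℝ → X →L[ℝ] X} {α c C D CY CXY s t : ℝ} (ha : 0 ≤ a) (hb0 : 0 ≤ b) (hb1 : b ≤ 1)
    (hcomm : (SY s).comp ι = ι.comp (S s))
    (hY : ‖SY s‖ ≤ CY * exp (-a * s ^ b))
    (hXY : ‖ι.comp (S s)‖ ≤ CXY * s ^ (-α) * exp (-a * s ^ b))
    (hT : ∀ r > (0 : ℝ), ‖T r‖ ≤ D * r ^ c * exp (-a * r ^ b))
    (hιT : ∀ r > (0 : ℝ), ‖ι.comp (T r)‖ ≤ C * r ^ (c - α) * exp (-a * r ^ b))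
    (hc : 0 ≤ c) (hC : 0 ≤ C) (hD : 0 ≤ D) (hCY : 0 ≤ CY) (hCXY : 0 ≤ CXY)
    (hs : s ∈ Ioo 0 t) :
    ‖ι.comp ((S s).comp (T (t - s)))‖ ≤
      (CY * C * 2 ^ |c - α| + CXY * D * 2 ^ |α|) * t ^ (c - α) * exp (-a * t ^ b) := by
  obtain ⟨hs0, hst⟩ := hs
  have ht : 0 < t := hs0.trans hst
  have hYpart : 0 ≤ CXY * D * 2 ^ |α| * t ^ (c - α) * exp (-a * t ^ b) := by positivity
  have hXpart : 0 ≤ CY * C * 2 ^ |c - α| * t ^ (c - α) * exp (-a * t ^ b) := by positivity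
  rcases le_total s (t / 2) with hhalf | hhalf
  · calc ‖ι.comp ((S s).comp (T (t - s)))‖ = ‖(SY s).comp (ι.comp (T (t - s)))‖ := by
          rw [← ContinuousLinearMap.comp_assoc, ← hcomm, ContinuousLinearMap.comp_assoc]
      _ ≤ CY * (C * (t - s) ^ (c - α)) * exp (-a * t ^ b) :=
          norm_comp_le_mul_exp_neg_mul_rpow _ _ ha hb0 hb1 hs0.le hst.le hY
            (hιT _ (sub_pos.2 hst))
      _ ≤ CY * (C * (2 ^ |c - α| * t ^ (c - α))) * exp (-a * t ^ b) := by
          gcongr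
          exact rpow_le_two_rpow_abs_mul_rpow _ ht (by linarith) (by linarith)
      _ ≤ _ := by linarith
  · calc ‖ι.comp ((S s).comp (T (t - s)))‖ = ‖(ι.comp (S s)).comp (T (t - s))‖ := by
          rw [ContinuousLinearMap.comp_assoc]
      _ ≤ CXY * s ^ (-α) * (D * (t - s) ^ c) * exp (-a * t ^ b) :=
          norm_comp_le_mul_exp_neg_mul_rpow _ _ ha hb0 hb1 hs0.le hst.le hXY
            (hT _ (sub_pos.2 hst))
      _ ≤ CXY * (2 ^ |-α| * t ^ (-α)) * (D * t ^ c) * exp (-a * t ^ b) := by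
          gcongr
          · exact rpow_le_two_rpow_abs_mul_rpow _ ht hhalf hst.le
          · linarith
      _ = CXY * D * 2 ^ |α| * t ^ (c - α) * exp (-a * t ^ b) := by
          rw [abs_neg, sub_eq_neg_add, rpow_add ht]
          ring
      _ ≤ _ := by linarith

lemma exists_norm_comp_iterConv_le [CompleteSpace X] [CompleteSpace Y] (ι : X →L[ℝ] Y)
    {SY : ℝ → Y →L[ℝ] Y} {α CX CY CXY : ℝ} (ha : 0 ≤ a) (hb0 : 0 ≤ b) (hb1 : b ≤ 1)
    (hcomm : ∀ t : ℝ, (SY t).comp ι = ι.comp (S t))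
    (hX : ∀ t > (0 : ℝ), ‖S t‖ ≤ CX * exp (-a * t ^ b))
    (hY : ∀ t > (0 : ℝ), ‖SY t‖ ≤ CY * exp (-a * t ^ b))
    (hXY : ∀ t > (0 : ℝ), ‖ι.comp (S t)‖ ≤ CXY * t ^ (-α) * exp (-a * t ^ b))
    (hSn1 : Sn 1 = S)
    (hSnrec : ∀ n : ℕ, 1 ≤ n → ∀ t : ℝ,
      Sn (n + 1) t = ∫ s in (0 : ℝ)..t, (S s).comp (Sn n (t - s)))
    {n : ℕ} (hn : 1 ≤ n) :
    ∃ C, 0 ≤ C ∧ ∀ t > (0 : ℝ),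
      ‖ι.comp (Sn n t)‖ ≤ C * t ^ ((n : ℝ) - 1 - α) * exp (-a * t ^ b) := by
  have hCY : 0 ≤ CY := nonneg_of_norm_le_mul (hY 1 one_pos) (exp_pos _)
  have hCXY : 0 ≤ CXY := by simpa using nonneg_of_norm_le_mul (hXY 1 one_pos) (exp_pos _)
  induction n, hn using Nat.le_induction with
  | base => exact ⟨CXY, hCXY, fun t ht => by simpa [hSn1] using hXY t ht⟩
  | succ n hn ih =>
    obtain ⟨C, hC, hιSn⟩ := ih
    obtain ⟨D, hD, hSn⟩ := exists_norm_iterConv_le ha hb0 hb1 hX hSn1 hSnrec hn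
    have hn' : (0 : ℝ) ≤ n - 1 := by
      rw [sub_nonneg]; exact_mod_cast hn
    refine ⟨CY * C * 2 ^ |(n : ℝ) - 1 - α| + CXY * D * 2 ^ |α|, by positivity, fun t ht => ?_⟩
    rw [hSnrec n hn t, ← ContinuousLinearMap.compL_apply ℝ X X Y ι]
    refine (norm_map_intervalIntegral_le_of_forall_Ioo _ ht fun s hs =>
      norm_comp_comp_le_rpow_mul_exp ι ha hb0 hb1 (hcomm s) (hY s hs.1) (hXY s hs.1) hSn hιSn hn'
        hC hD hCY hCXY hs).trans_eq ?_
    push_cast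
    rw [show (n : ℝ) + 1 - 1 - α = n - 1 - α + 1 by ring, rpow_add_one ht.ne']
    ring

end IteratedConvolution

theorem convolution_decay (X Y : Type*)
    [NormedAddCommGroup X] [NormedSpace ℝ X] [CompleteSpace X]
    [NormedAddCommGroup Y] [NormedSpace ℝ Y] [CompleteSpace Y]
    (ι : X →L[ℝ] Y)
    (S : ℝ → X →L[ℝ] X) (SY : ℝ → Y →L[ℝ] Y)
    (a b α CX CY CXY : ℝ)
    (ha : 0 < a) (hb0 : 0 < b) (hb1 : b < 1) (hα : 0 < α)
    (hcomm : ∀ t : ℝ, (SY t).comp ι = ι.comp (S t))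
    (hX : ∀ t > (0:ℝ), ‖S t‖ ≤ CX * Real.exp (-a * t ^ b))
    (hY : ∀ t > (0:ℝ), ‖SY t‖ ≤ CY * Real.exp (-a * t ^ b))
    (hXY : ∀ t > (0:ℝ), ‖ι.comp (S t)‖ ≤ CXY * t ^ (-α) * Real.exp (-a * t ^ b))
    (Sn : ℕ → ℝ → X →L[ℝ] X)
    (hSn1 : Sn 1 = S)
    (hSnrec : ∀ n : ℕ, 1 ≤ n → ∀ t : ℝ,
      Sn (n + 1) t = ∫ s in (0:ℝ)..t, (S s).comp (Sn n (t - s))) :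
    (∀ n : ℕ, 1 ≤ n → ∃ Cn : ℝ, ∀ t > (0:ℝ),
        ‖Sn n t‖ ≤ Cn * t ^ ((n : ℝ) - 1) * Real.exp (-a * t ^ b)) ∧
    (∀ n : ℕ, α + 1 < (n : ℝ) → ∀ b' : ℝ, 0 < b' → b' < b → ∃ Cn : ℝ, ∀ t > (0:ℝ),
        ‖ι.comp (Sn n t)‖ ≤ Cn * Real.exp (-a * t ^ b')) := by
  refine ⟨fun n hn => (exists_norm_iterConv_le ha.le hb0.le hb1.le hX hSn1 hSnrec hn).imp
    fun _ h => h.2, fun n hn b' hb'0 hb'b => ?_⟩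
  have h1n : 1 ≤ n := by exact_mod_cast (by linarith : (1 : ℝ) ≤ n)
  obtain ⟨C, hC, hιSn⟩ := exists_norm_comp_iterConv_le ι ha.le hb0.le hb1.le hcomm hX hY hXY
    hSn1 hSnrec h1n
  obtain ⟨K, hK⟩ := exists_rpow_mul_exp_neg_mul_rpow_le (β := n - 1 - α) (by linarith) ha hb'0 hb'b
  refine ⟨C * K, fun t ht => (hιSn t ht).trans ?_⟩
  rw [mul_assoc, mul_assoc]
  exact mul_le_mul_of_nonneg_left (hK t ht) hC
end

section
/- Lyapunov estimate for H = 3|v|² + 2x·v + |x|² + 1 with V(x) = ⟨x⟩^γ, γ ∈ (0,1): for any k ≥ 1 there exist constants C, K, R > 0 such that for all (x,v) ∈ ℝ^{2d}, Δᵥ H + (k−1)|∇ᵥH|²/H + v·∇ₓH − v·∇ᵥH − ∇ₓV(x)·∇ᵥH ≤ −C H^{γ/2} + K 𝟙_{|x|²+|v|² ≤ 2R²}. -/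
/-!
Write `a = ‖x‖`, `b = ‖v‖` and `⟨x⟩² = 1 + a²`. The transport terms combine to `-4 b²`.
Since `‖∇ᵥH‖² ≤ 12 H`, the diffusion term is bounded by `12 (k - 1)`. The confining force
`∇V = γ ⟨x⟩^(γ-2) x` has norm at most `γ` and satisfies `∇V · x ≥ γ ⟨x⟩^γ - γ`, so
`∇V · ∇ᵥH ≥ 2γ ⟨x⟩^γ - 2γ - 6γ b`. Finally `H ≤ 2⟨x⟩² + 4b²` and subadditivity of `t ↦ t^(γ/2)`
give `H^(γ/2) ≤ 2⟨x⟩^γ + 1 + 4b²`. With `C = γ/2` the left side plus `C H^(γ/2)` is at most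
`M + 6b - 2b² - γ⟨x⟩^γ` for a constant `M`; this is bounded everywhere and nonpositive once
`a` or `b` is large.
-/

open Real RealInnerProductSpace

noncomputable section

theorem one_add_sq_rpow_sub_one_mul_abs_le_one {t : ℝ} (ht : t ≤ 1 / 2) (a : ℝ) :
    (1 + a ^ 2) ^ (t - 1) * |a| ≤ 1 := by
  have hw : 1 ≤ 1 + a ^ 2 := le_add_of_nonneg_right (sq_nonneg a)
  have ha : |a| ≤ (1 + a ^ 2) ^ (1 / 2 : ℝ) := by
    rw [← sqrt_eq_rpow, ← sqrt_sq_eq_abs]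
    exact sqrt_le_sqrt (by linarith)
  calc (1 + a ^ 2) ^ (t - 1) * |a| ≤ (1 + a ^ 2) ^ (t - 1) * (1 + a ^ 2) ^ (1 / 2 : ℝ) :=
        mul_le_mul_of_nonneg_left ha (by positivity)
    _ = (1 + a ^ 2) ^ (t - 1 + 1 / 2) := (rpow_add (by positivity) _ _).symm
    _ ≤ 1 := rpow_le_one_of_one_le_of_nonpos hw (by linarith)

theorem rpow_le_one_add {x t : ℝ} (hx : 0 ≤ x) (ht0 : 0 ≤ t) (ht1 : t ≤ 1) : x ^ t ≤ 1 + x := by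
  have h := rpow_one_add_le_one_add_mul_self (s := x - 1) (by linarith) ht0 ht1
  rw [add_sub_cancel] at h
  nlinarith

section

variable {E : Type*} [NormedAddCommGroup E] [InnerProductSpace ℝ E]

def lyapunovH (x v : E) : ℝ := 3 * ‖v‖ ^ 2 + 2 * ⟪x, v⟫ + ‖x‖ ^ 2 + 1

theorem lyapunovH_eq (x v : E) : lyapunovH x v = ‖x + v‖ ^ 2 + 2 * ‖v‖ ^ 2 + 1 := by
  rw [lyapunovH, norm_add_sq_real]
  ring

theorem one_le_lyapunovH (x v : E) : 1 ≤ lyapunovH x v := by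
  rw [lyapunovH_eq]
  exact le_add_of_nonneg_left (by positivity)

theorem lyapunovH_le (x v : E) : lyapunovH x v ≤ 2 * (1 + ‖x‖ ^ 2) + 4 * ‖v‖ ^ 2 := by
  rw [lyapunovH]
  nlinarith [real_inner_le_norm x v, two_mul_le_add_sq ‖x‖ ‖v‖]

theorem lyapunovH_rpow_le (x v : E) {t : ℝ} (ht0 : 0 ≤ t) (ht1 : t ≤ 1) :
    lyapunovH x v ^ t ≤ 2 * (1 + ‖x‖ ^ 2) ^ t + 1 + 4 * ‖v‖ ^ 2 := by
  have h2 : (2 : ℝ) ^ t ≤ 2 := rpow_le_self_of_one_le one_le_two ht1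
  calc lyapunovH x v ^ t ≤ (2 * (1 + ‖x‖ ^ 2) + 4 * ‖v‖ ^ 2) ^ t :=
        rpow_le_rpow (by linarith [one_le_lyapunovH x v]) (lyapunovH_le x v) ht0
    _ ≤ (2 * (1 + ‖x‖ ^ 2)) ^ t + (4 * ‖v‖ ^ 2) ^ t :=
        rpow_add_le_add_rpow (by positivity) (by positivity) ht0 ht1
    _ = 2 ^ t * (1 + ‖x‖ ^ 2) ^ t + (4 * ‖v‖ ^ 2) ^ t := by
        rw [mul_rpow zero_le_two (by positivity)]
    _ ≤ 2 * (1 + ‖x‖ ^ 2) ^ t + (1 + 4 * ‖v‖ ^ 2) := by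
        gcongr
        exact rpow_le_one_add (by positivity) ht0 ht1
    _ = 2 * (1 + ‖x‖ ^ 2) ^ t + 1 + 4 * ‖v‖ ^ 2 := by ring

theorem norm_six_smul_add_two_smul_sq_le (x v : E) :
    ‖(6 : ℝ) • v + (2 : ℝ) • x‖ ^ 2 ≤ 12 * lyapunovH x v := by
  rw [norm_add_sq_real, norm_smul, norm_smul, real_inner_smul_left, real_inner_smul_right,
    real_inner_comm, Real.norm_ofNat, Real.norm_ofNat, lyapunovH]
  nlinarith [sq_nonneg ‖x‖]

theorem inner_two_smul_add_sub_inner_six_smul_add (x v : E) :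
    ⟪v, (2 : ℝ) • v + (2 : ℝ) • x⟫ - ⟪v, (6 : ℝ) • v + (2 : ℝ) • x⟫ = -4 * ‖v‖ ^ 2 := by
  simp only [inner_add_right, real_inner_smul_right, real_inner_self_eq_norm_sq]
  ring

variable {γ : ℝ}

theorem norm_rpow_smul_le (hγ0 : 0 ≤ γ) (hγ1 : γ ≤ 1) (x : E) :
    ‖(γ * (1 + ‖x‖ ^ 2) ^ (γ / 2 - 1)) • x‖ ≤ γ := by
  have h := one_add_sq_rpow_sub_one_mul_abs_le_one (t := γ / 2) (by linarith) ‖x‖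
  rw [abs_norm] at h
  rw [norm_smul, norm_mul, norm_of_nonneg hγ0, norm_of_nonneg (by positivity), mul_assoc]
  exact mul_le_of_le_one_right hγ0 h

theorem le_inner_rpow_smul_self (hγ0 : 0 ≤ γ) (hγ2 : γ ≤ 2) (x : E) :
    γ * (1 + ‖x‖ ^ 2) ^ (γ / 2) - γ ≤ ⟪(γ * (1 + ‖x‖ ^ 2) ^ (γ / 2 - 1)) • x, x⟫ := by
  have hw : 1 ≤ 1 + ‖x‖ ^ 2 := le_add_of_nonneg_right (by positivity)
  have hp : (1 + ‖x‖ ^ 2) ^ (γ / 2 - 1) ≤ 1 := rpow_le_one_of_one_le_of_nonpos hw (by linarith)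
  have hsplit : (1 + ‖x‖ ^ 2) ^ (γ / 2) = (1 + ‖x‖ ^ 2) ^ (γ / 2 - 1) * (1 + ‖x‖ ^ 2) := by
    rw [← rpow_add_one (by positivity), sub_add_cancel]
  rw [real_inner_smul_left, real_inner_self_eq_norm_sq, hsplit]
  nlinarith

theorem le_inner_rpow_smul_six_smul_add_two_smul (hγ0 : 0 ≤ γ) (hγ1 : γ ≤ 1) (x v : E) :
    2 * γ * (1 + ‖x‖ ^ 2) ^ (γ / 2) - 2 * γ - 6 * γ * ‖v‖
      ≤ ⟪(γ * (1 + ‖x‖ ^ 2) ^ (γ / 2 - 1)) • x, (6 : ℝ) • v + (2 : ℝ) • x⟫ := by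
  set g := (γ * (1 + ‖x‖ ^ 2) ^ (γ / 2 - 1)) • x
  have hgv : -(γ * ‖v‖) ≤ ⟪g, v⟫ :=
    (neg_le_neg (mul_le_mul_of_nonneg_right (norm_rpow_smul_le hγ0 hγ1 x) (norm_nonneg v))).trans
      (neg_le_of_abs_le (abs_real_inner_le_norm g v))
  have hgx := le_inner_rpow_smul_self hγ0 (by linarith) x
  rw [inner_add_right, real_inner_smul_right, real_inner_smul_right]
  linarith

end

theorem exists_radius_le_ite_ball {γ : ℝ} (hγ : 0 < γ) (M : ℝ) :
    ∃ R > (0 : ℝ), ∀ a b : ℝ, 0 ≤ b →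
      M + 6 * b - 2 * b ^ 2 - γ * (1 + a ^ 2) ^ (γ / 2)
        ≤ if a ^ 2 + b ^ 2 ≤ 2 * R ^ 2 then M + 5 else 0 := by
  obtain ⟨W, hW⟩ := Filter.eventually_atTop.mp
    (((tendsto_rpow_atTop (half_pos hγ)).const_mul_atTop hγ).eventually_ge_atTop (M + 5))
  refine ⟨max (|M| + 3) W, by positivity, fun a b hb => ?_⟩
  set R := max (|M| + 3) W
  have hMR : |M| + 3 ≤ R := le_max_left _ _
  have hWR : W ≤ R ^ 2 := (le_max_right _ _).trans (by nlinarith [abs_nonneg M])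
  have hV : 0 ≤ γ * (1 + a ^ 2) ^ (γ / 2) := by positivity
  split_ifs with hball
  · nlinarith [sq_nonneg (b - 3 / 2)]
  · rcases le_or_gt (b ^ 2) (R ^ 2) with hbR | hbR
    · have := hW (1 + a ^ 2) (by linarith)
      nlinarith [sq_nonneg (b - 3 / 2)]
    · have : R < b := lt_of_pow_lt_pow_left₀ 2 hb hbR
      nlinarith [le_abs_self M, abs_nonneg M, mul_nonneg hb (by linarith : 0 ≤ b - 3 - |M|)]

theorem lyapunov_estimate (d : ℕ) (γ : ℝ) (hγ : γ ∈ Set.Ioo (0:ℝ) 1) (k : ℝ) (hk : 1 ≤ k) :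
    ∃ C > (0:ℝ), ∃ K > (0:ℝ), ∃ R > (0:ℝ),
      ∀ x v : EuclideanSpace ℝ (Fin d),
        (6 * d : ℝ)
          + (k - 1) * ‖(6:ℝ) • v + (2:ℝ) • x‖ ^ 2
              / (3 * ‖v‖ ^ 2 + 2 * ⟪x, v⟫ + ‖x‖ ^ 2 + 1)
          + ⟪v, (2:ℝ) • v + (2:ℝ) • x⟫
          - ⟪v, (6:ℝ) • v + (2:ℝ) • x⟫
          - ⟪(γ * (1 + ‖x‖ ^ 2) ^ (γ/2 - 1)) • x, (6:ℝ) • v + (2:ℝ) • x⟫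
        ≤ -C * (3 * ‖v‖ ^ 2 + 2 * ⟪x, v⟫ + ‖x‖ ^ 2 + 1) ^ (γ/2)
          + (if ‖x‖ ^ 2 + ‖v‖ ^ 2 ≤ 2 * R ^ 2 then K else 0) := by
  obtain ⟨hγ0, hγ1⟩ := hγ
  set M : ℝ := 6 * d + 12 * (k - 1) + 3
  obtain ⟨R, hR, htail⟩ := exists_radius_le_ite_ball hγ0 M
  refine ⟨γ / 2, half_pos hγ0, M + 5, by positivity, R, hR, fun x v => ?_⟩
  have hdiffusion : (k - 1) * ‖(6:ℝ) • v + (2:ℝ) • x‖ ^ 2 / lyapunovH x v ≤ 12 * (k - 1) := by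
    rw [div_le_iff₀ (zero_lt_one.trans_le (one_le_lyapunovH x v)), mul_comm 12, mul_assoc]
    exact mul_le_mul_of_nonneg_left (norm_six_smul_add_two_smul_sq_le x v) (by linarith)
  have htransport := inner_two_smul_add_sub_inner_six_smul_add x v
  have hconfine := le_inner_rpow_smul_six_smul_add_two_smul hγ0.le hγ1.le x v
  have hH := lyapunovH_rpow_le x v (t := γ / 2) (by positivity) (by linarith)
  have hxv := htail ‖x‖ ‖v‖ (norm_nonneg v)
  have hγv : γ * ‖v‖ ≤ ‖v‖ := mul_le_of_le_one_left (norm_nonneg v) hγ1.le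
  have hγv2 : γ * ‖v‖ ^ 2 ≤ ‖v‖ ^ 2 := mul_le_of_le_one_left (by positivity) hγ1.le
  have hCH := mul_le_mul_of_nonneg_left hH (half_pos hγ0).le
  unfold lyapunovH at hdiffusion hCH
  linarith
end
end
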